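/- arXiv:1206.1125 — 5 statements merged into one kernel-verified Lean document; each statement's English description precedes it below -/
import Mathlib

section
/- Let M be an A-module with endomorphisms ψ, φ satisfying ψ∘φ = id. The A[ℤ]-linear map from A[ℤ] ⊗_{A[ℕ],φ} M to lim_ψ(M) sending [k] ⊗ m to φᵏ(σ₀(m)) (where the ℤ-action on the limit is by the invertible shift) is injective, with image the A[ℤ]-submodule generated by σ₀(M). -/
/-!
STATEMENT 4: Let `M` be an `A`-module with endomorphisms `ψ, φ` satisfying
`ψ ∘ φ = id`.  The `A[ℤ]`-linear map `A[ℤ] ⊗_{A[ℕ],φ} M → lim_ψ(M)` sending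
`[k] ⊗ m` to `φᵏ(σ₀(m))` (the `ℤ`-action on the limit being by the invertible
shift) is injective, with image the `A[ℤ]`-submodule generated by `σ₀(M)`.

Here `A[ℤ] ⊗_{A[ℕ],φ} M` is realized concretely as the quotient of `ℤ →₀ M` by the
`A[ℕ]`-balancing relations `single (k+1) m - single k (φ m)` (coming from
`[k]·[1] ⊗ m = [k] ⊗ φ(m)`), on which `[k] ⊗ m` is the class of `single k m`.
-/

variable {A : Type*} [CommRing A] {M : Type*} [AddCommGroup M] [Module A M]

/-- `lim_ψ(M)`, as a submodule of `ℕ → M`. -/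
def limMod (A : Type*) [CommRing A] {M : Type*} [AddCommGroup M] [Module A M]
    (ψ : M →ₗ[A] M) : Submodule A (ℕ → M) where
  carrier := {x | ∀ m, ψ (x (m + 1)) = x m}
  add_mem' := by intro a b ha hb m; simp [ha m, hb m]
  zero_mem' := by intro m; simp
  smul_mem' := by intro c x hx m; simp [hx m]

/-- The invertible shift `φ = ψ⁻¹` on `lim_ψ(M)`, making it an `A[ℤ]`-module. -/
def shiftEquiv (ψ : M →ₗ[A] M) : ↥(limMod A ψ) ≃ₗ[A] ↥(limMod A ψ) where
  toFun x := ⟨fun m => x.1 (m + 1), fun m => x.2 (m + 1)⟩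
  invFun x := ⟨fun m => Nat.rec (ψ (x.1 0)) (fun n _ => x.1 n) m, by
    intro m
    cases m with
    | zero => rfl
    | succ n => exact x.2 n⟩
  left_inv := by
    intro x
    apply Subtype.ext
    funext m
    cases m with
    | zero => exact x.2 0
    | succ n => rfl
  right_inv := by
    intro x
    apply Subtype.ext
    funext m
    rfl
  map_add' := by intro x y; apply Subtype.ext; funext m; rfl
  map_smul' := by intro c x; apply Subtype.ext; funext m; rfl

/-- `σ₀ : M → lim_ψ(M)`, `σ₀(x) = (φᵐ(x))ₘ`. -/
def sigma0 (φ ψ : M →ₗ[A] M) (hψφ : ∀ x, ψ (φ x) = x) : M →ₗ[A] ↥(limMod A ψ) where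
  toFun x := ⟨fun m => (φ ^ m : Module.End A M) x, by
    intro m
    show ψ ((φ ^ (m + 1) : Module.End A M) x) = (φ ^ m : Module.End A M) x
    rw [pow_succ', Module.End.mul_apply, hψφ]⟩
  map_add' := by intro x y; apply Subtype.ext; funext m; simp
  map_smul' := by intro c x; apply Subtype.ext; funext m; simp

/-- The `A[ℕ]`-balancing relations in `ℤ →₀ M` defining `A[ℤ] ⊗_{A[ℕ],φ} M`. -/
def relSet (φ : M →ₗ[A] M) : Set (ℤ →₀ M) :=
  {y | ∃ (k : ℤ) (m : M), y = Finsupp.single (k + 1) m - Finsupp.single k (φ m)}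

/-- A concrete model of `A[ℤ] ⊗_{A[ℕ],φ} M`: the quotient of `ℤ →₀ M` by the
balancing relations; `[k] ⊗ m` is the class of `single k m`. -/
def TensorModel (φ : M →ₗ[A] M) :=
  (ℤ →₀ M) ⧸ Submodule.span A (relSet φ)

noncomputable instance (φ : M →ₗ[A] M) : AddCommGroup (TensorModel φ) :=
  inferInstanceAs (AddCommGroup ((ℤ →₀ M) ⧸ Submodule.span A (relSet φ)))

noncomputable instance (φ : M →ₗ[A] M) : Module A (TensorModel φ) :=
  inferInstanceAs (Module A ((ℤ →₀ M) ⧸ Submodule.span A (relSet φ)))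

lemma shift_sigma0 (φ ψ : M →ₗ[A] M) (hψφ : ∀ x, ψ (φ x) = x) (m : M) :
    shiftEquiv ψ (sigma0 φ ψ hψφ m) = sigma0 φ ψ hψφ (φ m) := by
  apply Subtype.ext
  funext j
  show (φ ^ (j + 1) : Module.End A M) m = (φ ^ j : Module.End A M) (φ m)
  rw [pow_succ, Module.End.mul_apply]

/-- The canonical map `A[ℤ] ⊗_{A[ℕ],φ} M → lim_ψ(M)`, `[k] ⊗ m ↦ φᵏ(σ₀(m))`,
where `φᵏ` for `k ∈ ℤ` is the `k`-th power of the invertible shift. -/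
noncomputable def Theta (φ ψ : M →ₗ[A] M) (hψφ : ∀ x, ψ (φ x) = x) :
    TensorModel φ →ₗ[A] ↥(limMod A ψ) :=
  Submodule.liftQ (Submodule.span A (relSet φ))
    (Finsupp.lsum A fun k : ℤ =>
      ((shiftEquiv ψ ^ k : ↥(limMod A ψ) ≃ₗ[A] ↥(limMod A ψ))
          : ↥(limMod A ψ) →ₗ[A] ↥(limMod A ψ)) ∘ₗ sigma0 φ ψ hψφ)
    (by
      rw [Submodule.span_le]
      rintro y ⟨k, m, rfl⟩
      simp only [SetLike.mem_coe, LinearMap.mem_ker, map_sub, Finsupp.lsum_single,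
        LinearMap.coe_comp, Function.comp_apply, LinearEquiv.coe_coe]
      rw [zpow_add_one, sub_eq_zero]
      show (shiftEquiv ψ ^ k) (shiftEquiv ψ (sigma0 φ ψ hψφ m))
        = (shiftEquiv ψ ^ k) (sigma0 φ ψ hψφ (φ m))
      rw [shift_sigma0])

/- Every element of `A[ℤ] ⊗_{A[ℕ],φ} M` is a pure tensor `[N] ⊗ x`: the relation
`[k + n] ⊗ m = [k] ⊗ φⁿ(m)` moves all summands to a common index `N`. Such a tensor is
sent to `φᴺ(σ₀(x))`, and `σ₀` is injective since the `0`-th coordinate of `σ₀(x)` is `x`. -/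

namespace TensorModel

variable (φ : M →ₗ[A] M)

/-- The pure tensor `[k] ⊗ m`. -/
noncomputable def tmul (k : ℤ) : M →ₗ[A] TensorModel φ :=
  (Submodule.span A (relSet φ)).mkQ ∘ₗ Finsupp.lsingle k

lemma tmul_add_one (k : ℤ) (m : M) : tmul φ (k + 1) m = tmul φ k (φ m) :=
  (Submodule.Quotient.eq _).2 (Submodule.subset_span ⟨k, m, rfl⟩)

lemma tmul_add_natCast (k : ℤ) (n : ℕ) (m : M) :
    tmul φ (k + n) m = tmul φ k ((φ ^ n : Module.End A M) m) := by
  induction n generalizing m with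
  | zero => simp
  | succ n ih =>
    rw [Nat.cast_succ, ← add_assoc, tmul_add_one, ih, pow_succ, Module.End.mul_apply]

lemma eventually_atBot_exists_eq_tmul (q : TensorModel φ) :
    ∀ᶠ N in Filter.atBot, ∃ x, q = tmul φ N x := by
  obtain ⟨f, rfl⟩ := Submodule.Quotient.mk_surjective _ q
  induction f using Finsupp.induction with
  | zero =>
    exact .of_forall fun N => ⟨0, by rw [map_zero]; exact Submodule.Quotient.mk_zero _⟩
  | single_add k m g _ _ ih =>
    filter_upwards [Filter.eventually_le_atBot k, ih] with N hN ⟨x, hx⟩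
    obtain ⟨n, rfl⟩ := Int.le.dest hN
    refine ⟨(φ ^ n : Module.End A M) m + x, ?_⟩
    rw [map_add, ← tmul_add_natCast, ← hx, Submodule.Quotient.mk_add]
    rfl

lemma exists_eq_tmul (q : TensorModel φ) : ∃ N x, q = tmul φ N x :=
  (eventually_atBot_exists_eq_tmul φ q).exists

end TensorModel

open TensorModel

lemma sigma0_injective (φ ψ : M →ₗ[A] M) (hψφ : ∀ x, ψ (φ x) = x) :
    Function.Injective (sigma0 φ ψ hψφ) := fun x y h => by
  simpa [sigma0] using congrArg (fun z : limMod A ψ => z.1 0) h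

lemma theta_tmul (φ ψ : M →ₗ[A] M) (hψφ : ∀ x, ψ (φ x) = x) (k : ℤ) (m : M) :
    Theta φ ψ hψφ (tmul φ k m) = (shiftEquiv ψ ^ k) (sigma0 φ ψ hψφ m) := by
  show (Finsupp.lsum A _) (Finsupp.single k m) = _
  rw [Finsupp.lsum_single]
  rfl

/-- **(Prop. 2.6 of the paper.)** The map `[k] ⊗ m ↦ φᵏ(σ₀(m))` from
`A[ℤ] ⊗_{A[ℕ],φ} M` to `lim_ψ(M)` is injective, with image the `A[ℤ]`-submodule of
`lim_ψ(M)` generated by `σ₀(M)` (the compactly induced representation). -/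
theorem theta_injective_range (φ ψ : M →ₗ[A] M) (hψφ : ∀ x, ψ (φ x) = x) :
    Function.Injective (Theta φ ψ hψφ) ∧
    LinearMap.range (Theta φ ψ hψφ) =
      Submodule.span A {y : ↥(limMod A ψ) |
        ∃ (k : ℤ) (m : M), y = (shiftEquiv ψ ^ k) (sigma0 φ ψ hψφ m)} := by
  refine ⟨(injective_iff_map_eq_zero _).2 fun q hq => ?_, le_antisymm ?_ ?_⟩
  · obtain ⟨N, x, rfl⟩ := exists_eq_tmul φ q
    rw [theta_tmul, LinearEquiv.map_eq_zero_iff,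
      map_eq_zero_iff _ (sigma0_injective φ ψ hψφ)] at hq
    rw [hq, map_zero]
  · rintro _ ⟨q, rfl⟩
    obtain ⟨N, x, rfl⟩ := exists_eq_tmul φ q
    exact Submodule.subset_span ⟨N, x, theta_tmul φ ψ hψφ N x⟩
  · rw [Submodule.span_le]
    rintro _ ⟨k, m, rfl⟩
    exact ⟨tmul φ k m, theta_tmul φ ψ hψφ k m⟩
end

section
/- Let M be an étale A[P₊]-module. For t₁, t₂ ∈ L₊ the canonical left inverses satisfy ψ_{t₁t₂} = ψ_{t₂} ∘ ψ_{t₁}. Consequently the assignment (ut)⁻¹ ↦ ψₜ ∘ u⁻¹ for t ∈ L₊, u ∈ N₀ defines an action of the inverse monoid P₋ = L₋N₀ on M. -/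
/-!
A left inverse `ψ` of `φ` that kills `u φ(M)` for every `u ∉ N₀ ∩ tN₀t⁻¹` is unique once
`M = ⨁ u φ(M)`: on the summand `u φ(M)` it must be `u φ(m) ↦ (t⁻¹ut) m` or `0`.
Both `ψ_{t₂} ∘ ψ_{t₁}` and, for `ut = tv`, the twist `v⁻¹ ∘ ψ_t ∘ u` have the two defining
properties, so they equal `ψ_{t₁t₂}` and `ψ_t` respectively. The action of `P₋` follows by
moving `u₂⁻¹` across `ψ_{t₁}`.
-/

open scoped Classical

variable {P : Type*} [Group P]

/-- The subgroup `N₀ ∩ tN₀t⁻¹` of `N₀`, i.e. those `u ∈ N₀` with `t⁻¹ u t ∈ N₀`. -/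
def conjSub (N₀ : Subgroup P) (t : P) : Subgroup ↥N₀ where
  carrier := {u | t⁻¹ * (u : P) * t ∈ N₀}
  one_mem' := by simpa using N₀.one_mem
  mul_mem' := by
    intro a b ha hb
    show t⁻¹ * ((a * b : ↥N₀) : P) * t ∈ N₀
    have h : t⁻¹ * ((a * b : ↥N₀) : P) * t = (t⁻¹ * (a : P) * t) * (t⁻¹ * (b : P) * t) := by
      push_cast; group
    rw [h]
    exact N₀.mul_mem ha hb
  inv_mem' := by
    intro a ha
    show t⁻¹ * ((a⁻¹ : ↥N₀) : P) * t ∈ N₀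
    have h : t⁻¹ * ((a⁻¹ : ↥N₀) : P) * t = (t⁻¹ * (a : P) * t)⁻¹ := by
      push_cast; group
    rw [h]
    exact N₀.inv_mem ha

/-- An `A[P₊]`-module `M` (with `N₀`-action `ρ`) is *étale* at `t` (acting by `φ`)
if `φ` is injective and `M = ⨁_{u ∈ J(N₀/tN₀t⁻¹)} u·φ(M)`. -/
def IsEtaleAt (A : Type*) [CommRing A] (N₀ : Subgroup P) (t : P)
    {M : Type*} [AddCommGroup M] [Module A M]
    (ρ : ↥N₀ → Module.End A M) (φ : Module.End A M) : Prop :=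
  Function.Injective φ ∧
    DirectSum.IsInternal fun c : ↥N₀ ⧸ conjSub N₀ t =>
      LinearMap.range (ρ (Quotient.out c) * φ)

theorem LinearMap.ext_of_iSup_range_eq_top {R M N ι : Type*} [Semiring R] [AddCommMonoid M]
    [AddCommMonoid N] [Module R M] [Module R N] {g : ι → M →ₗ[R] M}
    (hg : ⨆ i, LinearMap.range (g i) = ⊤) {f f' : M →ₗ[R] N} (h : ∀ i, f ∘ₗ g i = f' ∘ₗ g i) :
    f = f' := by
  refine LinearMap.eqLocus_eq_top.1 (top_unique (hg ▸ iSup_le fun i => ?_))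
  rintro _ ⟨x, rfl⟩
  exact LinearMap.congr_fun (h i) x

section Etale

variable {A : Type*} [CommRing A] {N₀ : Subgroup P} {M : Type*} [AddCommGroup M] [Module A M]
  (ρ : ↥N₀ →* Module.End A M)

/-- `φ` is the action of `t` in an `A[P₊]`-module: `u ∘ φ = φ ∘ v` whenever `ut = tv`. -/
def Intertwines (t : P) (φ : Module.End A M) : Prop :=
  ∀ u v : ↥N₀, (u : P) * t = t * v → ρ u * φ = φ * ρ v

/-- `ψ` is the canonical left inverse `ψ_t` of `φ = φ_t`. -/
def IsCanonicalLeftInverse (t : P) (φ ψ : Module.End A M) : Prop :=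
  ψ * φ = 1 ∧ ∀ u : ↥N₀, u ∉ conjSub N₀ t → ∀ m : M, ψ (ρ u (φ m)) = 0

variable {ρ}

theorem intertwines_of_conj {t : P} (hstab : ∀ u : P, u ∈ N₀ → t * u * t⁻¹ ∈ N₀)
    {φ : Module.End A M}
    (hcompat : ∀ (u : ↥N₀) (m : M), φ (ρ u m) = ρ ⟨t * u * t⁻¹, hstab u u.2⟩ (φ m)) :
    Intertwines ρ t φ := by
  intro u v huv
  have hu : u = ⟨t * v * t⁻¹, hstab v v.2⟩ := Subtype.ext (by simp [← huv])
  ext m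
  simp [hu, hcompat]

theorem mem_conjSub_iff {t : P} {u : ↥N₀} :
    u ∈ conjSub N₀ t ↔ ∃ v : ↥N₀, (u : P) * t = t * v := by
  refine ⟨fun hu => ⟨⟨t⁻¹ * u * t, hu⟩, by simp [mul_assoc]⟩, fun ⟨v, huv⟩ => ?_⟩
  change t⁻¹ * u * t ∈ N₀
  rw [mul_assoc, huv, inv_mul_cancel_left]
  exact v.2

theorem Intertwines.mul {t₁ t₂ : P} {φ₁ φ₂ : Module.End A M} (h₁ : Intertwines ρ t₁ φ₁)
    (h₂ : Intertwines ρ t₂ φ₂) (hstab₂ : ∀ u : P, u ∈ N₀ → t₂ * u * t₂⁻¹ ∈ N₀) :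
    Intertwines ρ (t₁ * t₂) (φ₁ * φ₂) := by
  intro u v huv
  let w : ↥N₀ := ⟨t₂ * v * t₂⁻¹, hstab₂ v v.2⟩
  have huw : (u : P) * t₁ = t₁ * w :=
    calc (u : P) * t₁ = u * (t₁ * t₂) * t₂⁻¹ := by group
      _ = t₁ * (t₂ * v * t₂⁻¹) := by rw [huv]; group
  have hwv : (w : P) * t₂ = t₂ * v := by simp [w]
  rw [← mul_assoc, h₁ u w huw, mul_assoc, h₂ w v hwv, mul_assoc]

variable {t : P} {φ ψ : Module.End A M}

theorem IsCanonicalLeftInverse.apply_rho_phi (hψ : IsCanonicalLeftInverse ρ t φ ψ)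
    (hφ : Intertwines ρ t φ) {u v : ↥N₀} (huv : (u : P) * t = t * v) (m : M) :
    ψ (ρ u (φ m)) = ρ v m := by
  rw [← Module.End.mul_apply (ρ u), hφ u v huv, ← Module.End.mul_apply, ← mul_assoc, hψ.1,
    one_mul]

theorem IsCanonicalLeftInverse.eq {ψ' : Module.End A M}
    (hetale : IsEtaleAt A N₀ t (fun u => ρ u) φ) (hφ : Intertwines ρ t φ)
    (hψ : IsCanonicalLeftInverse ρ t φ ψ) (hψ' : IsCanonicalLeftInverse ρ t φ ψ') : ψ = ψ' := by
  refine LinearMap.ext_of_iSup_range_eq_top hetale.2.submodule_iSup_eq_top fun c => ?_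
  ext m
  simp only [LinearMap.comp_apply, Module.End.mul_apply]
  by_cases hu : c.out ∈ conjSub N₀ t
  · obtain ⟨v, huv⟩ := mem_conjSub_iff.1 hu
    rw [hψ.apply_rho_phi hφ huv, hψ'.apply_rho_phi hφ huv]
  · rw [hψ.2 _ hu, hψ'.2 _ hu]

theorem IsCanonicalLeftInverse.mul {t₁ t₂ : P} {φ₁ φ₂ ψ₁ ψ₂ : Module.End A M}
    (hψ₁ : IsCanonicalLeftInverse ρ t₁ φ₁ ψ₁) (hφ₁ : Intertwines ρ t₁ φ₁)
    (hψ₂ : IsCanonicalLeftInverse ρ t₂ φ₂ ψ₂) :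
    IsCanonicalLeftInverse ρ (t₁ * t₂) (φ₁ * φ₂) (ψ₂ * ψ₁) := by
  refine ⟨by rw [mul_assoc, ← mul_assoc ψ₁, hψ₁.1, one_mul, hψ₂.1], fun u hu m => ?_⟩
  rw [Module.End.mul_apply, Module.End.mul_apply]
  by_cases hu₁ : u ∈ conjSub N₀ t₁
  · obtain ⟨w, huw⟩ := mem_conjSub_iff.1 hu₁
    have hw : w ∉ conjSub N₀ t₂ := fun hw => hu <| by
      obtain ⟨v, hwv⟩ := mem_conjSub_iff.1 hw
      exact mem_conjSub_iff.2 ⟨v, by rw [← mul_assoc, huw, mul_assoc, hwv, mul_assoc]⟩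
    rw [hψ₁.apply_rho_phi hφ₁ huw, hψ₂.2 w hw]
  · rw [hψ₁.2 u hu₁, map_zero]

theorem IsCanonicalLeftInverse.conj (hψ : IsCanonicalLeftInverse ρ t φ ψ)
    (hφ : Intertwines ρ t φ) {u v : ↥N₀} (huv : (u : P) * t = t * v) :
    IsCanonicalLeftInverse ρ t φ (ρ v⁻¹ * ψ * ρ u) := by
  have hu : u ∈ conjSub N₀ t := mem_conjSub_iff.2 ⟨v, huv⟩
  refine ⟨?_, fun w hw m => ?_⟩
  · rw [mul_assoc, hφ u v huv, ← mul_assoc, mul_assoc _ ψ, hψ.1, mul_one, ← map_mul,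
      inv_mul_cancel, map_one]
  · have huw : u * w ∉ conjSub N₀ t := by rwa [Subgroup.mul_mem_cancel_left _ hu]
    rw [Module.End.mul_apply, Module.End.mul_apply, ← Module.End.mul_apply (ρ u), ← map_mul,
      hψ.2 _ huw, map_zero]

theorem IsCanonicalLeftInverse.mul_rho_eq_rho_mul (hψ : IsCanonicalLeftInverse ρ t φ ψ)
    (hetale : IsEtaleAt A N₀ t (fun u => ρ u) φ) (hφ : Intertwines ρ t φ) {u v : ↥N₀}
    (huv : (u : P) * t = t * v) : ψ * ρ u = ρ v * ψ := by
  conv_rhs => rw [← (hψ.conj hφ huv).eq hetale hφ hψ]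
  rw [mul_assoc, ← mul_assoc (ρ v), ← map_mul, mul_inv_cancel, map_one, one_mul]

end Etale

theorem psi_action_general (A : Type*) [CommRing A] (N₀ : Subgroup P) (t₁ t₂ : P)
    (hstab₁ : ∀ u : P, u ∈ N₀ → t₁ * u * t₁⁻¹ ∈ N₀)
    (hstab₂ : ∀ u : P, u ∈ N₀ → t₂ * u * t₂⁻¹ ∈ N₀)
    {M : Type*} [AddCommGroup M] [Module A M]
    (ρ : ↥N₀ →* Module.End A M) (φ₁ φ₂ ψ₁ ψ₂ ψ₁₂ : Module.End A M)
    (hcompat₁ : ∀ (u : ↥N₀) (m : M), φ₁ (ρ u m) = ρ ⟨t₁ * u * t₁⁻¹, hstab₁ u u.2⟩ (φ₁ m))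
    (hcompat₂ : ∀ (u : ↥N₀) (m : M), φ₂ (ρ u m) = ρ ⟨t₂ * u * t₂⁻¹, hstab₂ u u.2⟩ (φ₂ m))
    (hetale₁ : IsEtaleAt A N₀ t₁ (fun u => ρ u) φ₁)
    (hetale₁₂ : IsEtaleAt A N₀ (t₁ * t₂) (fun u => ρ u) (φ₁ * φ₂))
    (hψφ₁ : ψ₁ * φ₁ = 1)
    (hvanish₁ : ∀ u : ↥N₀, u ∉ conjSub N₀ t₁ → ∀ m : M, ψ₁ (ρ u (φ₁ m)) = 0)
    (hψφ₂ : ψ₂ * φ₂ = 1)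
    (hvanish₂ : ∀ u : ↥N₀, u ∉ conjSub N₀ t₂ → ∀ m : M, ψ₂ (ρ u (φ₂ m)) = 0)
    (hψφ₁₂ : ψ₁₂ * (φ₁ * φ₂) = 1)
    (hvanish₁₂ : ∀ u : ↥N₀, u ∉ conjSub N₀ (t₁ * t₂) →
      ∀ m : M, ψ₁₂ (ρ u ((φ₁ * φ₂) m)) = 0) :
    ψ₁₂ = ψ₂ * ψ₁ ∧
    ∀ u₁ u₂ : ↥N₀,
      (ψ₂ * ρ u₂⁻¹) * (ψ₁ * ρ u₁⁻¹)
        = ψ₁₂ * ρ (u₁ * ⟨t₁ * u₂ * t₁⁻¹, hstab₁ u₂ u₂.2⟩)⁻¹ := by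
  have hφ₁ := intertwines_of_conj hstab₁ hcompat₁
  have hψ₁ : IsCanonicalLeftInverse ρ t₁ φ₁ ψ₁ := ⟨hψφ₁, hvanish₁⟩
  have hψ₁₂ : ψ₁₂ = ψ₂ * ψ₁ :=
    IsCanonicalLeftInverse.eq hetale₁₂ (hφ₁.mul (intertwines_of_conj hstab₂ hcompat₂) hstab₂)
      ⟨hψφ₁₂, hvanish₁₂⟩ (hψ₁.mul hφ₁ ⟨hψφ₂, hvanish₂⟩)
  refine ⟨hψ₁₂, fun u₁ u₂ => ?_⟩
  set s : ↥N₀ := ⟨t₁ * u₂ * t₁⁻¹, hstab₁ u₂ u₂.2⟩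
  have hs : ((s⁻¹ : ↥N₀) : P) * t₁ = t₁ * (u₂⁻¹ : ↥N₀) := by simp [s, mul_assoc]
  calc (ψ₂ * ρ u₂⁻¹) * (ψ₁ * ρ u₁⁻¹) = ψ₂ * (ρ u₂⁻¹ * ψ₁) * ρ u₁⁻¹ := by simp only [mul_assoc]
    _ = ψ₂ * ψ₁ * (ρ s⁻¹ * ρ u₁⁻¹) := by
      rw [← hψ₁.mul_rho_eq_rho_mul hetale₁ hφ₁ hs]; simp only [mul_assoc]
    _ = ψ₁₂ * ρ (u₁ * s)⁻¹ := by rw [hψ₁₂, mul_inv_rev, map_mul]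

/-- **(Prop. 3.9 of the paper.)** `ψ_{t₁t₂} = ψ_{t₂} ∘ ψ_{t₁}`; consequently
`b⁻¹ = (ut)⁻¹ ↦ ψₜ ∘ u⁻¹` is multiplicative, i.e. defines an action of `P₋` on `M`:
`(ψ_{t₂} ∘ u₂⁻¹) ∘ (ψ_{t₁} ∘ u₁⁻¹) = ψ_{t₁t₂} ∘ (u₁ · t₁u₂t₁⁻¹)⁻¹`. -/
theorem psi_action (A : Type*) [CommRing A] (N₀ : Subgroup P) (t₁ t₂ : P)
    (hstab₁ : ∀ u : P, u ∈ N₀ → t₁ * u * t₁⁻¹ ∈ N₀)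
    (hstab₂ : ∀ u : P, u ∈ N₀ → t₂ * u * t₂⁻¹ ∈ N₀)
    {M : Type*} [AddCommGroup M] [Module A M]
    (ρ : ↥N₀ →* Module.End A M) (φ₁ φ₂ ψ₁ ψ₂ ψ₁₂ : Module.End A M)
    (hcompat₁ : ∀ (u : ↥N₀) (m : M), φ₁ (ρ u m) = ρ ⟨t₁ * u * t₁⁻¹, hstab₁ u u.2⟩ (φ₁ m))
    (hcompat₂ : ∀ (u : ↥N₀) (m : M), φ₂ (ρ u m) = ρ ⟨t₂ * u * t₂⁻¹, hstab₂ u u.2⟩ (φ₂ m))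
    (hetale₁ : IsEtaleAt A N₀ t₁ (fun u => ρ u) φ₁)
    (hetale₂ : IsEtaleAt A N₀ t₂ (fun u => ρ u) φ₂)
    (hetale₁₂ : IsEtaleAt A N₀ (t₁ * t₂) (fun u => ρ u) (φ₁ * φ₂))
    (hψφ₁ : ψ₁ * φ₁ = 1)
    (hvanish₁ : ∀ u : ↥N₀, u ∉ conjSub N₀ t₁ → ∀ m : M, ψ₁ (ρ u (φ₁ m)) = 0)
    (hψφ₂ : ψ₂ * φ₂ = 1)
    (hvanish₂ : ∀ u : ↥N₀, u ∉ conjSub N₀ t₂ → ∀ m : M, ψ₂ (ρ u (φ₂ m)) = 0)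
    (hψφ₁₂ : ψ₁₂ * (φ₁ * φ₂) = 1)
    (hvanish₁₂ : ∀ u : ↥N₀, u ∉ conjSub N₀ (t₁ * t₂) →
      ∀ m : M, ψ₁₂ (ρ u ((φ₁ * φ₂) m)) = 0) :
    ψ₁₂ = ψ₂ * ψ₁ ∧
    ∀ u₁ u₂ : ↥N₀,
      (ψ₂ * ρ u₂⁻¹) * (ψ₁ * ρ u₁⁻¹)
        = ψ₁₂ * ρ (u₁ * ⟨t₁ * u₂ * t₁⁻¹, hstab₁ u₂ u₂.2⟩)⁻¹ :=
  psi_action_general A N₀ t₁ t₂ hstab₁ hstab₂ ρ φ₁ φ₂ ψ₁ ψ₂ ψ₁₂ hcompat₁ hcompat₂ hetale₁ hetale₁₂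
    hψφ₁ hvanish₁ hψφ₂ hvanish₂ hψφ₁₂ hvanish₁₂
end

section
/- The category of étale A[P₊]-modules is abelian: the kernel and cokernel of any morphism between étale A[P₊]-modules are again étale. -/
open scoped Classical

/-!
STATEMENT 9: The category of étale `A[P₊]`-modules is abelian: the kernel and the
cokernel of any morphism between étale `A[P₊]`-modules are again étale (with the
induced actions of `N₀` and of the monoid `L₊`).
-/

variable {P : Type*} [Group P]

/-!
Since the `ρ(u)` are automorphisms, étaleness at `t` says that the map
`⨁_{c ∈ N₀/(N₀ ∩ tN₀t⁻¹)} M → M`, `(m_c) ↦ ∑ ρ(u_c) φ(m_c)`, is bijective. This map is natural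
in `M` and direct sums are exact, so the five lemma, applied to `0 → ker f → M → M'` and to
`M → M' → coker f → 0`, makes it bijective for the kernel and for the cokernel.
-/

open scoped DirectSum

namespace DirectSum

section

variable {R ι M : Type*} [Semiring R] [DecidableEq ι] [AddCommMonoid M] [Module R M]
  {N : ι → Type*} [∀ i, AddCommMonoid (N i)] [∀ i, Module R (N i)]

theorem isInternal_range_iff_bijective_toModule (g : ∀ i, N i →ₗ[R] M)
    (hg : ∀ i, Function.Injective (g i)) :
    IsInternal (fun i => LinearMap.range (g i)) ↔ Function.Bijective (toModule R ι M g) := by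
  have hfactor : toModule R ι M g = coeLinearMap (fun i => LinearMap.range (g i)) ∘ₗ
      lmap fun i => (LinearEquiv.ofInjective (g i) (hg i)).toLinearMap := by
    ext i x
    simp
  have hlmap : Function.Bijective
      (lmap fun i => (LinearEquiv.ofInjective (g i) (hg i)).toLinearMap) :=
    ⟨lmap_injective _ |>.mpr fun i => (LinearEquiv.ofInjective (g i) (hg i)).injective,
      lmap_surjective _ |>.mpr fun i => (LinearEquiv.ofInjective (g i) (hg i)).surjective⟩
  rw [hfactor, LinearMap.coe_comp, Function.Bijective.of_comp_iff _ hlmap]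
  rfl

theorem injective_of_bijective_toModule {g : ∀ i, N i →ₗ[R] M}
    (hg : Function.Bijective (toModule R ι M g)) (i : ι) : Function.Injective (g i) := by
  have : g i = toModule R ι M g ∘ₗ lof R ι N i := by ext; simp
  rw [this, LinearMap.coe_comp]
  exact hg.injective.comp (of_injective (β := N) i)

end

section

variable {R ι : Type*} [Semiring R] {M N Q : ι → Type*}
  [∀ i, AddCommMonoid (M i)] [∀ i, Module R (M i)]
  [∀ i, AddCommMonoid (N i)] [∀ i, Module R (N i)]
  [∀ i, AddCommMonoid (Q i)] [∀ i, Module R (Q i)]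

theorem exact_lmap {f : ∀ i, M i →ₗ[R] N i} {g : ∀ i, N i →ₗ[R] Q i}
    (h : ∀ i, Function.Exact (f i) (g i)) : Function.Exact (lmap f) (lmap g) := by
  rw [LinearMap.exact_iff, ker_lmap, range_lmap]
  congr 2
  ext i : 1
  exact LinearMap.exact_iff.mp (h i)

end

end DirectSum

section Etale

variable {A : Type*} [CommRing A] {N₀ : Subgroup P} {t : P}
  {M M' : Type*} [AddCommGroup M] [Module A M] [AddCommGroup M'] [Module A M']

variable (A N₀ t) in
noncomputable def etaleMap (ρ : ↥N₀ → Module.End A M) (φ : Module.End A M) :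
    (⨁ _ : ↥N₀ ⧸ conjSub N₀ t, M) →ₗ[A] M :=
  DirectSum.toModule A _ M fun c => ρ (Quotient.out c) * φ

theorem IsEtaleAt.bijective_etaleMap {ρ : ↥N₀ → Module.End A M} {φ : Module.End A M}
    (h : IsEtaleAt A N₀ t ρ φ) (hρ : ∀ u, Function.Injective (ρ u)) :
    Function.Bijective (etaleMap A N₀ t ρ φ) :=
  (DirectSum.isInternal_range_iff_bijective_toModule _ fun _ =>
    Module.End.coe_mul _ φ ▸ (hρ _).comp h.1).mp h.2

theorem IsEtaleAt.of_bijective_etaleMap {ρ : ↥N₀ → Module.End A M} {φ : Module.End A M}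
    (h : Function.Bijective (etaleMap A N₀ t ρ φ)) : IsEtaleAt A N₀ t ρ φ := by
  have hinj := DirectSum.injective_of_bijective_toModule h
  refine ⟨(Module.End.coe_mul _ φ ▸ hinj (QuotientGroup.mk 1)).of_comp, ?_⟩
  exact (DirectSum.isInternal_range_iff_bijective_toModule _ hinj).mpr h

theorem etaleMap_naturality {ρ : ↥N₀ → Module.End A M} {φ : Module.End A M}
    {ρ' : ↥N₀ → Module.End A M'} {φ' : Module.End A M'} (g : M →ₗ[A] M')
    (hρ : ∀ u, g ∘ₗ ρ u = ρ' u ∘ₗ g) (hφ : g ∘ₗ φ = φ' ∘ₗ g) :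
    g ∘ₗ etaleMap A N₀ t ρ φ = etaleMap A N₀ t ρ' φ' ∘ₗ DirectSum.lmap fun _ => g := by
  ext c x
  simp only [etaleMap, LinearMap.comp_apply, DirectSum.toModule_lof, DirectSum.lmap_lof,
    Module.End.mul_apply]
  rw [← LinearMap.comp_apply g, hρ, LinearMap.comp_apply, ← LinearMap.comp_apply g, hφ,
    LinearMap.comp_apply]

theorem IsEtaleAt.ker {ρ : ↥N₀ → Module.End A M} {φ : Module.End A M}
    {ρ' : ↥N₀ → Module.End A M'} {φ' : Module.End A M'}
    (he : IsEtaleAt A N₀ t ρ φ) (he' : IsEtaleAt A N₀ t ρ' φ')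
    (hρ : ∀ u, Function.Injective (ρ u)) (hρ' : ∀ u, Function.Injective (ρ' u))
    (f : M →ₗ[A] M') (hfρ : ∀ u, f ∘ₗ ρ u = ρ' u ∘ₗ f) (hfφ : f ∘ₗ φ = φ' ∘ₗ f)
    (hkρ : ∀ u, ∀ x ∈ LinearMap.ker f, ρ u x ∈ LinearMap.ker f)
    (hkφ : ∀ x ∈ LinearMap.ker f, φ x ∈ LinearMap.ker f) :
    IsEtaleAt A N₀ t (fun u => (ρ u).restrict (hkρ u)) (φ.restrict hkφ) :=
  .of_bijective_etaleMap <| LinearMap.bijective_of_bijective_of_injective_of_left_exact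
    _ _ _ _ _ _ _
    (etaleMap_naturality _ (fun _ => LinearMap.subtype_comp_restrict _)
      (LinearMap.subtype_comp_restrict _))
    (etaleMap_naturality f hfρ hfφ)
    (DirectSum.exact_lmap fun _ => LinearMap.exact_subtype_ker_map f)
    (LinearMap.exact_subtype_ker_map f)
    (he.bijective_etaleMap hρ) (he'.bijective_etaleMap hρ').injective
    ((DirectSum.lmap_injective _).mpr fun _ => Submodule.injective_subtype _)
    (Submodule.injective_subtype _)

theorem IsEtaleAt.coker {ρ : ↥N₀ → Module.End A M} {φ : Module.End A M}
    {ρ' : ↥N₀ → Module.End A M'} {φ' : Module.End A M'}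
    (he : IsEtaleAt A N₀ t ρ φ) (he' : IsEtaleAt A N₀ t ρ' φ')
    (hρ : ∀ u, Function.Injective (ρ u)) (hρ' : ∀ u, Function.Injective (ρ' u))
    (f : M →ₗ[A] M') (hfρ : ∀ u, f ∘ₗ ρ u = ρ' u ∘ₗ f) (hfφ : f ∘ₗ φ = φ' ∘ₗ f)
    (hcρ : ∀ u, LinearMap.range f ≤ (LinearMap.range f).comap (ρ' u))
    (hcφ : LinearMap.range f ≤ (LinearMap.range f).comap φ') :
    IsEtaleAt A N₀ t (fun u => Submodule.mapQ _ _ (ρ' u) (hcρ u))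
      (Submodule.mapQ _ _ φ' hcφ) :=
  .of_bijective_etaleMap <| LinearMap.bijective_of_surjective_of_bijective_of_right_exact
    _ _ _ _ _ _ _
    (etaleMap_naturality f hfρ hfφ)
    (etaleMap_naturality _ (fun _ => (Submodule.mapQ_mkQ _ _ _).symm)
      (Submodule.mapQ_mkQ _ _ _).symm)
    (DirectSum.exact_lmap fun _ => LinearMap.exact_map_mkQ_range f)
    (LinearMap.exact_map_mkQ_range f)
    (he.bijective_etaleMap hρ).surjective (he'.bijective_etaleMap hρ')
    ((DirectSum.lmap_surjective _).mpr fun _ => Submodule.mkQ_surjective _)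
    (Submodule.mkQ_surjective _)

end Etale

theorem ker_coker_etale_general (A : Type*) [CommRing A] (N₀ : Subgroup P) (Lp : Submonoid P)
    {M M' : Type*} [AddCommGroup M] [Module A M] [AddCommGroup M'] [Module A M']
    (ρ : ↥N₀ →* Module.End A M) (ρ' : ↥N₀ →* Module.End A M')
    (Φ : ↥Lp →* Module.End A M) (Φ' : ↥Lp →* Module.End A M')
    (hetale : ∀ t : ↥Lp, IsEtaleAt A N₀ (t : P) (fun u => ρ u) (Φ t))
    (hetale' : ∀ t : ↥Lp, IsEtaleAt A N₀ (t : P) (fun u => ρ' u) (Φ' t))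
    (f : M →ₗ[A] M')
    (hfN : ∀ u : ↥N₀, f ∘ₗ (ρ u : M →ₗ[A] M) = (ρ' u : M' →ₗ[A] M') ∘ₗ f)
    (hfL : ∀ t : ↥Lp, f ∘ₗ (Φ t : M →ₗ[A] M) = (Φ' t : M' →ₗ[A] M') ∘ₗ f)
    -- stability of the kernel and the image (consequences of equivariance):
    (hkρ : ∀ u : ↥N₀, ∀ x ∈ LinearMap.ker f, ρ u x ∈ LinearMap.ker f)
    (hkΦ : ∀ t : ↥Lp, ∀ x ∈ LinearMap.ker f, Φ t x ∈ LinearMap.ker f)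
    (hcρ : ∀ u : ↥N₀, LinearMap.range f ≤ (LinearMap.range f).comap (ρ' u : M' →ₗ[A] M'))
    (hcΦ : ∀ t : ↥Lp, LinearMap.range f ≤ (LinearMap.range f).comap (Φ' t : M' →ₗ[A] M')) :
    (∀ t : ↥Lp, IsEtaleAt A N₀ (t : P)
        (fun u : ↥N₀ => ((ρ u : M →ₗ[A] M).restrict (hkρ u) :
          Module.End A ↥(LinearMap.ker f)))
        ((Φ t : M →ₗ[A] M).restrict (hkΦ t))) ∧
    (∀ t : ↥Lp, IsEtaleAt A N₀ (t : P)
        (fun u : ↥N₀ => (Submodule.mapQ (LinearMap.range f) (LinearMap.range f)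
          (ρ' u : M' →ₗ[A] M') (hcρ u) :
            Module.End A (M' ⧸ LinearMap.range f)))
        (Submodule.mapQ (LinearMap.range f) (LinearMap.range f)
          (Φ' t : M' →ₗ[A] M') (hcΦ t))) := by
  have hρ : ∀ u, Function.Injective (ρ u) := fun u =>
    ((Module.End.isUnit_iff _).mp ((Group.isUnit u).map ρ)).injective
  have hρ' : ∀ u, Function.Injective (ρ' u) := fun u =>
    ((Module.End.isUnit_iff _).mp ((Group.isUnit u).map ρ')).injective
  exact ⟨fun t => (hetale t).ker (hetale' t) hρ hρ' f hfN (hfL t) hkρ (hkΦ t),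
    fun t => (hetale t).coker (hetale' t) hρ hρ' f hfN (hfL t) hcρ (hcΦ t)⟩

/-- **(Prop. 3.10 of the paper.)**  For a morphism `f : M → M'` of étale
`A[P₊]`-modules (equivariant for `N₀` and for every `t` in the submonoid `L₊`),
the kernel `ker f` with the restricted actions and the cokernel `M' ⧸ range f`
with the induced actions are again étale `A[P₊]`-modules. -/
theorem ker_coker_etale (A : Type*) [CommRing A] (N₀ : Subgroup P) (Lp : Submonoid P)
    (hconj : ∀ t ∈ Lp, ∀ u ∈ N₀, t * u * t⁻¹ ∈ N₀)
    {M M' : Type*} [AddCommGroup M] [Module A M] [AddCommGroup M'] [Module A M']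
    (ρ : ↥N₀ →* Module.End A M) (ρ' : ↥N₀ →* Module.End A M')
    (Φ : ↥Lp →* Module.End A M) (Φ' : ↥Lp →* Module.End A M')
    (hcompat : ∀ (t : ↥Lp) (u : ↥N₀) (m : M),
      Φ t (ρ u m) = ρ ⟨(t : P) * u * (t : P)⁻¹, hconj t t.2 u u.2⟩ (Φ t m))
    (hcompat' : ∀ (t : ↥Lp) (u : ↥N₀) (m : M'),
      Φ' t (ρ' u m) = ρ' ⟨(t : P) * u * (t : P)⁻¹, hconj t t.2 u u.2⟩ (Φ' t m))
    (hetale : ∀ t : ↥Lp, IsEtaleAt A N₀ (t : P) (fun u => ρ u) (Φ t))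
    (hetale' : ∀ t : ↥Lp, IsEtaleAt A N₀ (t : P) (fun u => ρ' u) (Φ' t))
    (f : M →ₗ[A] M')
    (hfN : ∀ u : ↥N₀, f ∘ₗ (ρ u : M →ₗ[A] M) = (ρ' u : M' →ₗ[A] M') ∘ₗ f)
    (hfL : ∀ t : ↥Lp, f ∘ₗ (Φ t : M →ₗ[A] M) = (Φ' t : M' →ₗ[A] M') ∘ₗ f)
    -- stability of the kernel and the image (consequences of equivariance):
    (hkρ : ∀ u : ↥N₀, ∀ x ∈ LinearMap.ker f, ρ u x ∈ LinearMap.ker f)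
    (hkΦ : ∀ t : ↥Lp, ∀ x ∈ LinearMap.ker f, Φ t x ∈ LinearMap.ker f)
    (hcρ : ∀ u : ↥N₀, LinearMap.range f ≤ (LinearMap.range f).comap (ρ' u : M' →ₗ[A] M'))
    (hcΦ : ∀ t : ↥Lp, LinearMap.range f ≤ (LinearMap.range f).comap (Φ' t : M' →ₗ[A] M')) :
    (∀ t : ↥Lp, IsEtaleAt A N₀ (t : P)
        (fun u : ↥N₀ => ((ρ u : M →ₗ[A] M).restrict (hkρ u) :
          Module.End A ↥(LinearMap.ker f)))
        ((Φ t : M →ₗ[A] M).restrict (hkΦ t))) ∧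
    (∀ t : ↥Lp, IsEtaleAt A N₀ (t : P)
        (fun u : ↥N₀ => (Submodule.mapQ (LinearMap.range f) (LinearMap.range f)
          (ρ' u : M' →ₗ[A] M') (hcρ u) :
            Module.End A (M' ⧸ LinearMap.range f)))
        (Submodule.mapQ (LinearMap.range f) (LinearMap.range f)
          (Φ' t : M' →ₗ[A] M') (hcΦ t))) :=
  ker_coker_etale_general A N₀ Lp ρ ρ' Φ Φ' hetale hetale' f hfN hfL hkρ hkΦ hcρ hcΦ
end

section
/- Let M be an A[P₊]-module such that the action φ of the single element s is étale, i.e., φ is injective and M = ⨁_{u ∈ J(N₀/sN₀s⁻¹)} u φ(M). Then M is an étale A[P₊]-module, i.e., the action of every t ∈ L₊ is étale. -/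
open scoped Classical

/-!
Étaleness at `t` says that `φₜ` is injective and `M = ⨁_{c ∈ N₀/tN₀t⁻¹} ρ(c) φₜ(M)`.
It is stable under products: as `u` runs over `N₀/aN₀a⁻¹` and `v` over `N₀/bN₀b⁻¹`, the
elements `u · ava⁻¹` represent every coset of `abN₀(ab)⁻¹`, and the corresponding summand at
`ab` is the image of the summand of `v` at `b` under the injective map `ρ(u) φₐ`; so the
decomposition at `ab` refines the one at `a`. Conversely, if `rt = tr` is étale then so is `t`:
`φᵣ` maps the summands at `t` injectively onto distinct summands at `rt`, and every summand at
`tr` lies in one at `t`. Thus `s` étale gives `sᵏ` étale, and `t ∈ L₊` is handled by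
`r = sᵏt⁻¹`, which commutes with `t` because `s` is central.
-/

variable {P : Type*} [Group P]

lemma mem_conjSub {N₀ : Subgroup P} {t : P} {u : ↥N₀} :
    u ∈ conjSub N₀ t ↔ t⁻¹ * (u : P) * t ∈ N₀ := Iff.rfl

theorem iSupIndep.prod {α ι κ : Type*} [CompleteLattice α] [IsModularLattice α]
    {t : ι × κ → α} (hout : iSupIndep fun i => ⨆ j, t (i, j))
    (hin : ∀ i, iSupIndep fun j => t (i, j)) : iSupIndep t := by
  rintro ⟨i, j⟩
  have hle : ⨆ (x) (_ : x ≠ (i, j)), t x ≤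
      (⨆ (j') (_ : j' ≠ j), t (i, j')) ⊔ ⨆ (i') (_ : i' ≠ i), ⨆ j', t (i', j') := by
    refine iSup₂_le fun ⟨i', j'⟩ hne => ?_
    by_cases hi : i' = i
    · subst hi
      exact le_sup_of_le_left (le_biSup (fun j' => t (i', j')) fun hj => hne (by rw [hj]))
    · exact le_sup_of_le_right ((le_iSup (fun j' => t (i', j')) j').trans
        (le_biSup (fun i' => ⨆ j', t (i', j')) hi))
  refine Disjoint.mono_right hle ((hin i j).disjoint_sup_right_of_disjoint_sup_left ?_)
  exact (hout i).mono_left (sup_le (le_iSup (fun j' => t (i, j')) j) (iSup₂_le fun j' _ =>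
    le_iSup (fun j' => t (i, j')) j'))

theorem iSupIndep.of_map {R M M' ι : Type*} [Ring R] [AddCommGroup M] [Module R M]
    [AddCommGroup M'] [Module R M'] {f : M →ₗ[R] M'} (hf : Function.Injective f)
    {p : ι → Submodule R M} (h : iSupIndep fun i => (p i).map f) : iSupIndep p := fun i => by
  have hi := h i
  simp_rw [← Submodule.map_iSup] at hi
  rw [disjoint_iff, ← Submodule.map_inf f hf] at hi
  exact disjoint_iff.mpr
    (Submodule.map_injective_of_injective hf (hi.trans (Submodule.map_bot f).symm))

section

variable {N₀ : Subgroup P}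

def conjElem {a : P} (ha : ∀ u ∈ N₀, a * u * a⁻¹ ∈ N₀) (u : N₀) : N₀ :=
  ⟨a * u * a⁻¹, ha u u.2⟩

@[simp] lemma coe_conjElem {a : P} (ha : ∀ u ∈ N₀, a * u * a⁻¹ ∈ N₀) (u : N₀) :
    (conjElem ha u : P) = a * u * a⁻¹ := rfl

lemma mk_conjElem_eq_mk_conjElem_iff {r : P} (hr : ∀ u ∈ N₀, r * u * r⁻¹ ∈ N₀) (t : P)
    {x y : N₀} :
    ((conjElem hr x : N₀) : N₀ ⧸ conjSub N₀ (r * t)) = conjElem hr y ↔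
      (x : N₀ ⧸ conjSub N₀ t) = y := by
  rw [QuotientGroup.eq, QuotientGroup.eq, mem_conjSub, mem_conjSub]
  convert Iff.rfl using 2
  simp only [Subgroup.coe_mul, Subgroup.coe_inv, coe_conjElem]
  group

lemma surjective_mk_mul_conjElem {a : P} (ha : ∀ u ∈ N₀, a * u * a⁻¹ ∈ N₀) (b : P) :
    Function.Surjective fun ce : (N₀ ⧸ conjSub N₀ a) × (N₀ ⧸ conjSub N₀ b) =>
      ((ce.1.out * conjElem ha ce.2.out : N₀) : N₀ ⧸ conjSub N₀ (a * b)) := by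
  intro q
  obtain ⟨u, rfl⟩ := QuotientGroup.mk_surjective q
  set c : N₀ ⧸ conjSub N₀ a := QuotientGroup.mk u
  have hc : c.out⁻¹ * u ∈ conjSub N₀ a := QuotientGroup.eq.mp c.out_eq'
  set w : N₀ := ⟨a⁻¹ * ↑(c.out⁻¹ * u) * a, hc⟩
  set e : N₀ ⧸ conjSub N₀ b := QuotientGroup.mk w
  have he : e.out⁻¹ * w ∈ conjSub N₀ b := QuotientGroup.eq.mp e.out_eq'
  refine ⟨(c, e), QuotientGroup.eq.mpr ?_⟩
  rw [mem_conjSub] at he ⊢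
  convert he using 1
  simp only [w, Subgroup.coe_mul, Subgroup.coe_inv, coe_conjElem]
  group

end

section

variable {A : Type*} [CommRing A] {N₀ : Subgroup P} {M : Type*} [AddCommGroup M] [Module A M]
  (ρ : N₀ →* Module.End A M)

def ConjEquivariant (t : P) (φ : Module.End A M) : Prop :=
  ∀ u v : N₀, (v : P) = t * u * t⁻¹ → φ * ρ u = ρ v * φ

noncomputable def etaleSummand (t : P) (φ : Module.End A M) (c : N₀ ⧸ conjSub N₀ t) :
    Submodule A M :=
  LinearMap.range (ρ c.out * φ)

variable {ρ} {a b r t : P} {φ φa φb φr φt : Module.End A M}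

lemma isEtaleAt_iff : IsEtaleAt A N₀ t ρ φ ↔
    Function.Injective φ ∧ iSupIndep (etaleSummand ρ t φ) ∧ ⨆ c, etaleSummand ρ t φ c = ⊤ := by
  rw [IsEtaleAt, DirectSum.isInternal_submodule_iff_iSupIndep_and_iSup_eq_top]
  rfl

lemma injective_mul_of_injective (u : N₀) (hφ : Function.Injective φ) :
    Function.Injective (ρ u * φ) :=
  ((Module.End.isUnit_iff _).mp ((Group.isUnit u).map ρ)).injective.comp hφ

namespace ConjEquivariant

lemma mul (ha : ConjEquivariant ρ a φa) (hb : ConjEquivariant ρ b φb)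
    (hbN : ∀ u ∈ N₀, b * u * b⁻¹ ∈ N₀) : ConjEquivariant ρ (a * b) (φa * φb) := by
  intro u v huv
  have hv : (v : P) = a * conjElem hbN u * a⁻¹ := by rw [huv, coe_conjElem]; group
  rw [mul_assoc, hb u (conjElem hbN u) rfl, ← mul_assoc, ha _ v hv, mul_assoc]

lemma range_mul_le (h : ConjEquivariant ρ t φ) {u v : N₀}
    (huv : (u : N₀ ⧸ conjSub N₀ t) = v) :
    LinearMap.range (ρ u * φ) ≤ LinearMap.range (ρ v * φ) := by
  have hmem : v⁻¹ * u ∈ conjSub N₀ t := QuotientGroup.eq.mp huv.symm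
  set w : N₀ := ⟨t⁻¹ * ↑(v⁻¹ * u) * t, hmem⟩
  have hfactor : ρ u * φ = ρ v * φ * ρ w :=
    calc ρ u * φ = ρ v * (ρ (v⁻¹ * u) * φ) := by rw [← mul_assoc, ← map_mul, mul_inv_cancel_left]
      _ = ρ v * φ * ρ w := by rw [← h w _ (by simp only [w]; group), mul_assoc]
  rw [hfactor]
  exact LinearMap.range_comp_le_range _ _

lemma etaleSummand_mk (h : ConjEquivariant ρ t φ) (u : N₀) :
    etaleSummand ρ t φ u = LinearMap.range (ρ u * φ) :=
  le_antisymm (h.range_mul_le (QuotientGroup.out_eq' _))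
    (h.range_mul_le (QuotientGroup.out_eq' _).symm)

end ConjEquivariant

lemma etaleSummand_mul_mk_mul_conjElem (ha : ConjEquivariant ρ a φa)
    (hab : ConjEquivariant ρ (a * b) (φa * φb)) (haN : ∀ u ∈ N₀, a * u * a⁻¹ ∈ N₀)
    (c : N₀ ⧸ conjSub N₀ a) (e : N₀ ⧸ conjSub N₀ b) :
    etaleSummand ρ (a * b) (φa * φb) ↑(c.out * conjElem haN e.out) =
      (etaleSummand ρ b φb e).map (ρ c.out * φa) := by
  rw [hab.etaleSummand_mk, etaleSummand, ← LinearMap.range_comp, ← Module.End.mul_eq_comp,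
    map_mul]
  simp only [mul_assoc]
  rw [← mul_assoc (ρ _) φa, ← ha e.out (conjElem haN e.out) rfl, mul_assoc]

lemma iSup_etaleSummand_mul_mk_mul_conjElem (hb : ⨆ e, etaleSummand ρ b φb e = ⊤)
    (ha : ConjEquivariant ρ a φa) (hab : ConjEquivariant ρ (a * b) (φa * φb))
    (haN : ∀ u ∈ N₀, a * u * a⁻¹ ∈ N₀) (c : N₀ ⧸ conjSub N₀ a) :
    ⨆ e : N₀ ⧸ conjSub N₀ b, etaleSummand ρ (a * b) (φa * φb) ↑(c.out * conjElem haN e.out) =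
      etaleSummand ρ a φa c := by
  simp_rw [etaleSummand_mul_mk_mul_conjElem ha hab, ← Submodule.map_iSup, hb, Submodule.map_top]
  rfl

theorem IsEtaleAt.mul (ha : IsEtaleAt A N₀ a ρ φa) (hb : IsEtaleAt A N₀ b ρ φb)
    (hφa : ConjEquivariant ρ a φa) (hφb : ConjEquivariant ρ b φb)
    (haN : ∀ u ∈ N₀, a * u * a⁻¹ ∈ N₀) (hbN : ∀ u ∈ N₀, b * u * b⁻¹ ∈ N₀) :
    IsEtaleAt A N₀ (a * b) ρ (φa * φb) := by
  rw [isEtaleAt_iff] at ha hb ⊢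
  obtain ⟨haInj, haIndep, haTop⟩ := ha
  obtain ⟨hbInj, hbIndep, hbTop⟩ := hb
  have hab := hφa.mul hφb hbN
  have hsurj := surjective_mk_mul_conjElem haN b
  refine ⟨haInj.comp hbInj, .comp' (.prod ?_ fun c => ?_) hsurj, ?_⟩
  · simpa only [Function.comp_apply, iSup_etaleSummand_mul_mk_mul_conjElem hbTop hφa hab]
      using haIndep
  · simp only [Function.comp_apply, etaleSummand_mul_mk_mul_conjElem hφa hab]
    exact LinearMap.iSupIndep_map _ (injective_mul_of_injective _ haInj) hbIndep
  · rw [← hsurj.iSup_comp, iSup_prod]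
    simpa only [iSup_etaleSummand_mul_mk_mul_conjElem hbTop hφa hab] using haTop

lemma map_etaleSummand (hr : ConjEquivariant ρ r φr) (hrt : ConjEquivariant ρ (r * t) (φr * φt))
    (hrN : ∀ u ∈ N₀, r * u * r⁻¹ ∈ N₀) (c : N₀ ⧸ conjSub N₀ t) :
    (etaleSummand ρ t φt c).map φr = etaleSummand ρ (r * t) (φr * φt) ↑(conjElem hrN c.out) := by
  rw [hrt.etaleSummand_mk, etaleSummand, ← LinearMap.range_comp, ← Module.End.mul_eq_comp,
    ← mul_assoc, hr c.out (conjElem hrN c.out) rfl, mul_assoc]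

lemma iSupIndep_etaleSummand_of_mul (hφr : Function.Injective φr)
    (h : iSupIndep (etaleSummand ρ (r * t) (φr * φt))) (hr : ConjEquivariant ρ r φr)
    (hrt : ConjEquivariant ρ (r * t) (φr * φt)) (hrN : ∀ u ∈ N₀, r * u * r⁻¹ ∈ N₀) :
    iSupIndep (etaleSummand ρ t φt) := by
  refine iSupIndep.of_map hφr ?_
  simp only [map_etaleSummand hr hrt hrN]
  refine h.comp fun c c' hcc' => ?_
  simpa only [QuotientGroup.out_eq'] using (mk_conjElem_eq_mk_conjElem_iff hrN t).mp hcc'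

lemma iSup_etaleSummand_mul_le (ht : ConjEquivariant ρ t φt) :
    ⨆ d, etaleSummand ρ (t * r) (φt * φr) d ≤ ⨆ c, etaleSummand ρ t φt c := by
  refine iSup_le fun d => ?_
  calc etaleSummand ρ (t * r) (φt * φr) d ≤ LinearMap.range (ρ d.out * φt) := by
        rw [etaleSummand, ← mul_assoc]
        exact LinearMap.range_comp_le_range _ _
    _ = etaleSummand ρ t φt ↑d.out := (ht.etaleSummand_mk _).symm
    _ ≤ _ := le_iSup (etaleSummand ρ t φt) _

theorem IsEtaleAt.of_mul_of_commute (h : IsEtaleAt A N₀ (r * t) ρ (φr * φt))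
    (hcomm : r * t = t * r) (hφcomm : φr * φt = φt * φr)
    (hφr : ConjEquivariant ρ r φr) (hφt : ConjEquivariant ρ t φt)
    (hrN : ∀ u ∈ N₀, r * u * r⁻¹ ∈ N₀) (htN : ∀ u ∈ N₀, t * u * t⁻¹ ∈ N₀) :
    IsEtaleAt A N₀ t ρ φt := by
  have h' : IsEtaleAt A N₀ (t * r) ρ (φt * φr) := hcomm ▸ hφcomm ▸ h
  rw [isEtaleAt_iff] at h h' ⊢
  have injective_right {f g : Module.End A M} (hfg : Function.Injective (f * g)) :
      Function.Injective g := Function.Injective.of_comp (f := f) hfg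
  exact ⟨injective_right h.1,
    iSupIndep_etaleSummand_of_mul (injective_right h'.1) h.2.1 hφr (hφr.mul hφt htN) hrN,
    top_unique (h'.2.2 ▸ iSup_etaleSummand_mul_le hφt)⟩

end

/-- **(Prop. 3.19 of the paper.)**  If the action of the central element `s` on the
`A[P₊]`-module `M` is étale, then the action of every `t ∈ L₊` is étale. -/
theorem etale_of_etale_s (A : Type*) [CommRing A] (N₀ : Subgroup P) (Lp : Submonoid P)
    (hconj : ∀ t ∈ Lp, ∀ u ∈ N₀, t * u * t⁻¹ ∈ N₀)
    (s : P) (hsLp : s ∈ Lp)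
    (hcentral : ∀ t ∈ Lp, Commute s t)
    (hdom : ∀ t ∈ Lp, ∃ k : ℕ, s ^ k * t⁻¹ ∈ Lp)
    {M : Type*} [AddCommGroup M] [Module A M]
    (ρ : ↥N₀ →* Module.End A M) (Φ : ↥Lp →* Module.End A M)
    (hcompat : ∀ (t : ↥Lp) (u : ↥N₀) (m : M),
      Φ t (ρ u m) = ρ ⟨(t : P) * u * (t : P)⁻¹, hconj t t.2 u u.2⟩ (Φ t m))
    (hetale_s : IsEtaleAt A N₀ s (fun u => ρ u) (Φ ⟨s, hsLp⟩)) :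
    ∀ t : ↥Lp, IsEtaleAt A N₀ (t : P) (fun u => ρ u) (Φ t) := by
  have hequiv (t : Lp) : ConjEquivariant ρ t (Φ t) := fun u v huv => by
    obtain rfl : v = ⟨_, hconj t t.2 u u.2⟩ := Subtype.ext huv
    exact LinearMap.ext (hcompat t u)
  have hpres (t : Lp) : ∀ u ∈ N₀, (t : P) * u * (t : P)⁻¹ ∈ N₀ := hconj t t.2
  set σ : Lp := ⟨s, hsLp⟩
  -- positive exponents only, so that étaleness at `1` is never needed
  have hpow (k : ℕ) : IsEtaleAt A N₀ ((σ ^ (k + 1) : Lp) : P) ρ (Φ (σ ^ (k + 1))) := by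
    induction k with
    | zero => simpa using hetale_s
    | succ k ih =>
      rw [pow_succ, map_mul, Submonoid.coe_mul]
      exact ih.mul hetale_s (hequiv _) (hequiv σ) (hpres _) (hpres σ)
  intro t
  obtain ⟨k, hk⟩ := hdom t t.2
  have hsk : Commute (s ^ (k + 1)) t := (hcentral t t.2).pow_left (k + 1)
  let r : Lp := ⟨s ^ (k + 1) * (t : P)⁻¹, by
    simpa only [pow_succ', mul_assoc] using Lp.mul_mem hsLp hk⟩
  have hrt : r * t = σ ^ (k + 1) := Subtype.ext (by simp [r, σ])
  have hcomm : r * t = t * r := Subtype.ext <| by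
    simp only [r, Submonoid.coe_mul, ← mul_assoc, ← hsk.eq, inv_mul_cancel_right,
      mul_inv_cancel_right]
  refine IsEtaleAt.of_mul_of_commute (r := (r : P)) ?_ (congrArg Subtype.val hcomm)
    (by rw [← map_mul, hcomm, map_mul]) (hequiv r) (hequiv t) (hpres r) (hpres t)
  rw [← Submonoid.coe_mul, ← map_mul, hrt]
  exact hpow k
end

section
/- Let M be a topologically étale A[P₊]-module and C ⊆ P₊ a compact subgroup. Then the open C-stable A-submodules of M form a basis of neighborhoods of 0 in M. -/
open scoped Classical

variable {P : Type*} [Group P]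

/-! Given an open submodule `S`, the elements `x` with `c • x ∈ S` for all `c ∈ C` form a
`C`-stable submodule inside `S`; it is open by the tube lemma, since `C` is compact and the
action is jointly continuous. -/

theorem IsCompact.isOpen_setOf_forall_mem {X Y : Type*} [TopologicalSpace X] [TopologicalSpace Y]
    {K : Set Y} (hK : IsCompact K) {W : Set (Y × X)} (hW : IsOpen W) :
    IsOpen {x | ∀ y ∈ K, (y, x) ∈ W} :=
  isOpen_iff_mem_nhds.2 fun _ hx => hK.eventually_forall_of_forall_eventually fun y hy =>
    continuous_swap.continuousAt.preimage_mem_nhds (hW.mem_nhds (hx y hy))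

namespace Submodule

variable {G R M : Type*} [Monoid G] [Semiring R] [AddCommMonoid M] [Module R M]
  {ρ : G →* Module.End R M} {H : Submonoid G} {S : Submodule R M}

/-- The largest `ρ(H)`-stable submodule contained in `S`. -/
def stableCore (ρ : G →* Module.End R M) (H : Submonoid G) (S : Submodule R M) :
    Submodule R M :=
  ⨅ g ∈ H, S.comap (ρ g)

theorem mem_stableCore {x : M} : x ∈ S.stableCore ρ H ↔ ∀ g ∈ H, ρ g x ∈ S := by
  simp [stableCore]

theorem stableCore_le : S.stableCore ρ H ≤ S := fun x hx => by
  simpa using mem_stableCore.1 hx 1 H.one_mem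

theorem map_mem_stableCore {g : G} (hg : g ∈ H) {x : M} (hx : x ∈ S.stableCore ρ H) :
    ρ g x ∈ S.stableCore ρ H :=
  mem_stableCore.2 fun g' hg' => by
    simpa [Module.End.mul_apply] using mem_stableCore.1 hx _ (H.mul_mem hg' hg)

theorem isOpen_stableCore [TopologicalSpace G] [TopologicalSpace M]
    (hρ : Continuous fun q : G × M => ρ q.1 q.2) (hH : IsCompact (H : Set G))
    (hS : IsOpen (S : Set M)) : IsOpen (S.stableCore ρ H : Set M) := by
  have hcore :
      (S.stableCore ρ H : Set M) = {x | ∀ g ∈ H, (g, x) ∈ {q : G × M | ρ q.1 q.2 ∈ S}} :=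
    Set.ext fun _ => mem_stableCore
  exact hcore ▸ hH.isOpen_setOf_forall_mem (hS.preimage hρ)

end Submodule

theorem open_stable_submodules_basis_general
    [TopologicalSpace P]
    (A : Type*) [CommRing A]
    (Pp : Submonoid P)
    {M : Type*} [AddCommGroup M] [Module A M]
    [TopologicalSpace M]
    -- `M` is linearly topologized
    (hlin : (nhds (0 : M)).HasBasis
      (fun S : Submodule A M => IsOpen (S : Set M)) (fun S => (S : Set M)))
    (π : ↥Pp →* Module.End A M)
    (hcont : Continuous fun q : ↥Pp × M => π q.1 q.2)
    (C : Subgroup P) (hCPp : ∀ c ∈ C, c ∈ Pp) (hCcompact : IsCompact (C : Set P)) :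
    (nhds (0 : M)).HasBasis
      (fun S : Submodule A M => IsOpen (S : Set M) ∧
        ∀ (c : P) (hc : c ∈ C), ∀ x ∈ S, π ⟨c, hCPp c hc⟩ x ∈ S)
      (fun S => (S : Set M)) := by
  let H : Submonoid ↥Pp := C.toSubmonoid.comap Pp.subtype
  have hH : IsCompact (H : Set ↥Pp) :=
    Topology.IsInducing.subtypeVal.isCompact_preimage' hCcompact
      fun c hc => ⟨⟨c, hCPp c hc⟩, rfl⟩
  refine hlin.restrict fun S hS => ⟨S.stableCore π H, ?_, ?_, Submodule.stableCore_le⟩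
  · exact Submodule.isOpen_stableCore hcont hH hS
  · intro c hc x hx
    exact Submodule.map_mem_stableCore (H := H) hc hx

/-- **(Lemma 4.3 of the paper.)**  For a topologically étale `A[P₊]`-module `M` (a
linearly topologized `A`-module with continuous `P₊`-action) and a compact subgroup
`C ⊆ P₊`, the open `C`-stable `A`-submodules form a basis of neighborhoods of `0`. -/
theorem open_stable_submodules_basis
    [TopologicalSpace P] [IsTopologicalGroup P]
    (A : Type*) [CommRing A] [TopologicalSpace A] [IsTopologicalRing A]
    (N₀ : Subgroup P) (Pp : Submonoid P)
    (hN₀Pp : ∀ u : P, u ∈ N₀ → u ∈ Pp)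
    (hconj : ∀ b ∈ Pp, ∀ u ∈ N₀, b * u * b⁻¹ ∈ N₀)
    {M : Type*} [AddCommGroup M] [Module A M]
    [TopologicalSpace M] [IsTopologicalAddGroup M] [ContinuousSMul A M]
    -- `M` is linearly topologized
    (hlin : (nhds (0 : M)).HasBasis
      (fun S : Submodule A M => IsOpen (S : Set M)) (fun S => (S : Set M)))
    (π : ↥Pp →* Module.End A M)
    (hcont : Continuous fun q : ↥Pp × M => π q.1 q.2)
    (hetale : ∀ b : ↥Pp, IsEtaleAt A N₀ (b : P)
      (fun u : ↥N₀ => π ⟨(u : P), hN₀Pp u u.2⟩) (π b))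
    (Ψ : ↥Pp → Module.End A M)
    (hψφ : ∀ b : ↥Pp, Ψ b * π b = 1)
    (hvanish : ∀ (b : ↥Pp) (u : ↥N₀), u ∉ conjSub N₀ (b : P) →
      ∀ m : M, Ψ b (π ⟨(u : P), hN₀Pp u u.2⟩ (π b m)) = 0)
    (hΨcont : ∀ b : ↥Pp, Continuous (Ψ b))
    (C : Subgroup P) (hCPp : ∀ c ∈ C, c ∈ Pp) (hCcompact : IsCompact (C : Set P)) :
    (nhds (0 : M)).HasBasis
      (fun S : Submodule A M => IsOpen (S : Set M) ∧
        ∀ (c : P) (hc : c ∈ C), ∀ x ∈ S, π ⟨c, hCPp c hc⟩ x ∈ S)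
      (fun S => (S : Set M)) :=
  open_stable_submodules_basis_general A Pp hlin π hcont C hCPp hCcompact
end
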